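/- Suppose q is a primitive ℓ-th root of unity with ℓ > 1 odd. Then b^ℓ, c^ℓ, and d^ℓ are central in O_q⁺(GL_2). -/
import Mathlib


noncomputable section

/-- Generators of the reflection equation algebra O_q⁺(GL₂). -/
inductive OGen : Type
  | a | b | c | d

/-- Generators inside the free algebra. -/
def Af : FreeAlgebra ℂ OGen := FreeAlgebra.ι ℂ OGen.a
def Bf : FreeAlgebra ℂ OGen := FreeAlgebra.ι ℂ OGen.b
def Cf : FreeAlgebra ℂ OGen := FreeAlgebra.ι ℂ OGen.c
def Df : FreeAlgebra ℂ OGen := FreeAlgebra.ι ℂ OGen.d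

/-- The defining relations of O_q⁺(GL₂). -/
inductive OqRel (q : ℂ) : FreeAlgebra ℂ OGen → FreeAlgebra ℂ OGen → Prop
  | da : OqRel q (Df * Af) (Af * Df)
  | db : OqRel q (Df * Bf) (q ^ 2 • (Bf * Df))
  | dc : OqRel q (Df * Cf) (q⁻¹ ^ 2 • (Cf * Df))
  | cb : OqRel q (Cf * Bf) (Bf * Cf + (1 - q⁻¹ ^ 2) • (Af * Df - Df * Df))
  | ba : OqRel q (Bf * Af) (Af * Bf + (1 - q⁻¹ ^ 2) • (Bf * Df))
  | ca : OqRel q (Cf * Af) (Af * Cf + (q⁻¹ ^ 2 - 1) • (Df * Cf))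

/-- The reflection equation algebra O_q⁺(GL₂), presented by generators and relations. -/
abbrev OqGL2 (q : ℂ) := RingQuot (OqRel q)

/-- The images of the generators a, b, c, d in O_q⁺(GL₂). -/
def ag (q : ℂ) : OqGL2 q := RingQuot.mkAlgHom ℂ (OqRel q) Af
def bg (q : ℂ) : OqGL2 q := RingQuot.mkAlgHom ℂ (OqRel q) Bf
def cg (q : ℂ) : OqGL2 q := RingQuot.mkAlgHom ℂ (OqRel q) Cf
def dg (q : ℂ) : OqGL2 q := RingQuot.mkAlgHom ℂ (OqRel q) Df

section Lemmas
section Lemmas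
set_option linter.unnecessarySeqFocus false
set_option linter.unreachableTactic false
set_option linter.unusedTactic false

variable (q : ℂ)

/-- The element a d - d². -/
def Eg : OqGL2 q := ag q * dg q - dg q * dg q

lemma rel_da : dg q * ag q = ag q * dg q := by
  have h := RingQuot.mkAlgHom_rel ℂ (OqRel.da (q := q))
  simpa [dg, ag, map_mul] using h

lemma rel_db : dg q * bg q = q ^ 2 • (bg q * dg q) := by
  have h := RingQuot.mkAlgHom_rel ℂ (OqRel.db (q := q))
  simpa [dg, bg, map_mul, map_smul] using h

lemma rel_dc : dg q * cg q = q⁻¹ ^ 2 • (cg q * dg q) := by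
  have h := RingQuot.mkAlgHom_rel ℂ (OqRel.dc (q := q))
  simpa [dg, cg, map_mul, map_smul] using h

lemma rel_cb : cg q * bg q = bg q * cg q + (1 - q⁻¹ ^ 2) • Eg q := by
  have h := RingQuot.mkAlgHom_rel ℂ (OqRel.cb (q := q))
  simpa [Eg, ag, bg, cg, dg, map_mul, map_smul, map_add, map_sub] using h

lemma rel_ba : bg q * ag q = ag q * bg q + (1 - q⁻¹ ^ 2) • (bg q * dg q) := by
  have h := RingQuot.mkAlgHom_rel ℂ (OqRel.ba (q := q))
  simpa [ag, bg, dg, map_mul, map_smul, map_add] using h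

lemma rel_ca : cg q * ag q = ag q * cg q + (q⁻¹ ^ 2 - 1) • (dg q * cg q) := by
  have h := RingQuot.mkAlgHom_rel ℂ (OqRel.ca (q := q))
  simpa [ag, cg, dg, map_mul, map_smul, map_add] using h

lemma rel_ac : ag q * cg q = cg q * ag q - (q⁻¹ ^ 2 - 1) • (dg q * cg q) :=
  eq_sub_iff_add_eq.mpr (rel_ca q).symm

lemma rel_bc : bg q * cg q = cg q * bg q - (1 - q⁻¹ ^ 2) • Eg q :=
  eq_sub_iff_add_eq.mpr (rel_cb q).symm

-- inverse-free (scaled) forms of the relations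
lemma rel_cd (hq0 : q ≠ 0) : cg q * dg q = q ^ 2 • (dg q * cg q) := by
  have h : q ^ 2 * q⁻¹ ^ 2 = 1 := by field_simp
  rw [rel_dc, smul_smul, h, one_smul]

lemma rel_ba2 (hq0 : q ≠ 0) :
    q ^ 2 • (bg q * ag q) = q ^ 2 • (ag q * bg q) + (q ^ 2 - 1) • (bg q * dg q) := by
  have h : q ^ 2 * (1 - q⁻¹ ^ 2) = q ^ 2 - 1 := by field_simp
  rw [rel_ba, smul_add, smul_smul, h]

lemma rel_cb2 (hq0 : q ≠ 0) :
    q ^ 2 • (cg q * bg q) = q ^ 2 • (bg q * cg q) + (q ^ 2 - 1) • Eg q := by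
  have h : q ^ 2 * (1 - q⁻¹ ^ 2) = q ^ 2 - 1 := by field_simp
  rw [rel_cb, smul_add, smul_smul, h]

lemma rel_ca2 (hq0 : q ≠ 0) :
    q ^ 2 • (cg q * ag q) = q ^ 2 • (ag q * cg q) + (1 - q ^ 2) • (dg q * cg q) := by
  have h : q ^ 2 * (q⁻¹ ^ 2 - 1) = 1 - q ^ 2 := by field_simp; try ring
  rw [rel_ca, smul_add, smul_smul, h]

lemma rel_ab2 (hq0 : q ≠ 0) :
    q ^ 2 • (ag q * bg q) = q ^ 2 • (bg q * ag q) - (q ^ 2 - 1) • (bg q * dg q) :=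
  eq_sub_iff_add_eq.mpr (rel_ba2 q hq0).symm

-- trailing forms
lemma db' (x : OqGL2 q) : dg q * (bg q * x) = q ^ 2 • (bg q * (dg q * x)) := by
  rw [← mul_assoc, rel_db, smul_mul_assoc, mul_assoc]

lemma dc' (x : OqGL2 q) : dg q * (cg q * x) = q⁻¹ ^ 2 • (cg q * (dg q * x)) := by
  rw [← mul_assoc, rel_dc, smul_mul_assoc, mul_assoc]

lemma cd' (hq0 : q ≠ 0) (x : OqGL2 q) :
    cg q * (dg q * x) = q ^ 2 • (dg q * (cg q * x)) := by
  rw [← mul_assoc, rel_cd q hq0, smul_mul_assoc, mul_assoc]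

-- powers of b, c against d
lemma pow_db (n : ℕ) : dg q * bg q ^ n = q ^ (2 * n) • (bg q ^ n * dg q) := by
  induction n with
  | zero => simp
  | succ n ih =>
      calc dg q * bg q ^ (n + 1) = dg q * (bg q * bg q ^ n) := by rw [pow_succ']
      _ = q ^ 2 • (bg q * (dg q * bg q ^ n)) := db' q _
      _ = q ^ 2 • (bg q * (q ^ (2 * n) • (bg q ^ n * dg q))) := by rw [ih]
      _ = q ^ (2 * (n + 1)) • (bg q ^ (n + 1) * dg q) := by
            simp only [mul_smul_comm, smul_smul, pow_succ', mul_assoc]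
            ring_nf

lemma pow_dc (n : ℕ) : dg q * cg q ^ n = q⁻¹ ^ (2 * n) • (cg q ^ n * dg q) := by
  induction n with
  | zero => simp
  | succ n ih =>
      calc dg q * cg q ^ (n + 1) = dg q * (cg q * cg q ^ n) := by rw [pow_succ']
      _ = q⁻¹ ^ 2 • (cg q * (dg q * cg q ^ n)) := dc' q _
      _ = q⁻¹ ^ 2 • (cg q * (q⁻¹ ^ (2 * n) • (cg q ^ n * dg q))) := by rw [ih]
      _ = q⁻¹ ^ (2 * (n + 1)) • (cg q ^ (n + 1) * dg q) := by
            simp only [mul_smul_comm, smul_smul, pow_succ', mul_assoc]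
            ring_nf

-- powers of d against b, c
lemma pow_bd (n : ℕ) : dg q ^ n * bg q = q ^ (2 * n) • (bg q * dg q ^ n) := by
  induction n with
  | zero => simp
  | succ n ih =>
      rw [pow_succ' (dg q) n, mul_assoc, ih, mul_smul_comm, ← mul_assoc, rel_db,
        smul_mul_assoc, smul_smul, mul_assoc, ← pow_succ']
      match_scalars <;> ring

lemma pow_cd2 (n : ℕ) : dg q ^ n * cg q = q⁻¹ ^ (2 * n) • (cg q * dg q ^ n) := by
  induction n with
  | zero => simp
  | succ n ih =>
      rw [pow_succ' (dg q) n, mul_assoc, ih, mul_smul_comm, ← mul_assoc, rel_dc,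
        smul_mul_assoc, smul_smul, mul_assoc, ← pow_succ']
      match_scalars <;> ring

-- powers of b, c against a (scaled, inverse-free)
lemma pow_ba (hq0 : q ≠ 0) (n : ℕ) :
    q ^ 2 • (bg q ^ n * ag q)
      = q ^ 2 • (ag q * bg q ^ n) + (q ^ (2 * n) - 1) • (bg q ^ n * dg q) := by
  induction n with
  | zero => simp
  | succ n ih =>
      rw [pow_succ' (bg q) n, mul_assoc, ← mul_smul_comm, ih, mul_add, mul_smul_comm,
        mul_smul_comm, ← mul_assoc (bg q) (ag q), ← smul_mul_assoc, rel_ba2 q hq0,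
        add_mul, smul_mul_assoc, smul_mul_assoc, mul_assoc (bg q) (dg q), pow_db]
      simp only [mul_smul_comm, smul_smul, smul_add, ← mul_assoc]
      match_scalars <;> ring

lemma pow_ca (hq0 : q ≠ 0) (n : ℕ) :
    q ^ 2 • (cg q ^ n * ag q)
      = q ^ 2 • (ag q * cg q ^ n) + (1 - q ^ (2 * n)) • (dg q * cg q ^ n) := by
  induction n with
  | zero => simp
  | succ n ih =>
      rw [pow_succ' (cg q) n, mul_assoc, ← mul_smul_comm, ih, mul_add, mul_smul_comm,
        mul_smul_comm, ← mul_assoc (cg q) (ag q), ← smul_mul_assoc, rel_ca2 q hq0,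
        add_mul, smul_mul_assoc, smul_mul_assoc, cd' q hq0]
      simp only [mul_smul_comm, smul_smul, smul_add, ← mul_assoc]
      match_scalars <;> ring

-- E against b (inverse-free) and against c (purely in q⁻¹)
lemma ddb : (dg q * dg q) * bg q = q ^ 4 • (bg q * (dg q * dg q)) := by
  rw [mul_assoc, rel_db, mul_smul_comm, ← mul_assoc, rel_db, smul_mul_assoc, smul_smul,
    mul_assoc]
  match_scalars <;> ring

lemma ddc : (dg q * dg q) * cg q = q⁻¹ ^ 4 • (cg q * (dg q * dg q)) := by
  rw [mul_assoc, rel_dc, mul_smul_comm, ← mul_assoc, rel_dc, smul_mul_assoc, smul_smul,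
    mul_assoc]
  match_scalars <;> ring

lemma Eb (hq0 : q ≠ 0) :
    q ^ 2 • (Eg q * bg q)
      = q ^ 4 • (bg q * Eg q) - (q ^ 2 * (q ^ 4 - 1)) • (bg q * (dg q * dg q)) := by
  rw [Eg, sub_mul, smul_sub, ddb, mul_assoc, rel_db, mul_smul_comm, smul_smul,
    ← mul_assoc, ← smul_smul, ← smul_mul_assoc (q ^ 2) (ag q * bg q), rel_ab2 q hq0,
    sub_mul, smul_mul_assoc, smul_mul_assoc, mul_assoc, mul_assoc]
  simp only [Eg, smul_sub, smul_smul, mul_sub, sub_mul]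
  match_scalars <;> ring

lemma Ec :
    Eg q * cg q = q⁻¹ ^ 2 • (cg q * Eg q) + (q⁻¹ ^ 2 - q⁻¹ ^ 6) • (cg q * (dg q * dg q)) := by
  rw [Eg, sub_mul, ddc, mul_assoc, rel_dc, mul_smul_comm, ← mul_assoc, rel_ac,
    sub_mul, smul_mul_assoc, mul_assoc, rel_dc]
  simp only [Eg, smul_sub, smul_smul, mul_sub, sub_mul, mul_smul_comm, smul_mul_assoc,
    mul_assoc]
  match_scalars <;> ring

-- c against powers of b (scaled, inverse-free)
lemma pow_cb (hq0 : q ≠ 0) (n : ℕ) :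
    q ^ 4 • (cg q * bg q ^ (n + 1)) = q ^ 4 • (bg q ^ (n + 1) * cg q)
      + (q ^ 2 * (q ^ (2 * (n + 1)) - 1)) • (bg q ^ n * Eg q)
      + (-(q ^ (4 * (n + 1))) + (q ^ 2 + 1) * q ^ (2 * (n + 1)) - q ^ 2)
          • (bg q ^ n * (dg q * dg q)) := by
  induction n with
  | zero =>
      have h : (q : ℂ) ^ 4 = q ^ 2 * q ^ 2 := by ring
      rw [pow_one, h, ← smul_smul, rel_cb2 q hq0]
      simp only [pow_zero, one_mul, smul_add, smul_smul]
      match_scalars <;> ring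
  | succ n ih =>
      rw [pow_succ (bg q) (n + 1), ← mul_assoc, ← smul_mul_assoc, ih, add_mul, add_mul,
        smul_mul_assoc, smul_mul_assoc, smul_mul_assoc,
        mul_assoc (bg q ^ (n + 1)),
        mul_assoc (bg q ^ n) (Eg q), mul_assoc (bg q ^ n) (dg q * dg q), ddb,
        show (q : ℂ) ^ 4 = q ^ 2 * q ^ 2 from by ring, ← smul_smul,
        ← mul_smul_comm (q ^ 2) (bg q ^ (n + 1)) (cg q * bg q),
        rel_cb2 q hq0,
        show (q : ℂ) ^ 2 * (q ^ (2 * (n + 1)) - 1) = (q ^ (2 * (n + 1)) - 1) * q ^ 2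
          from by ring,
        ← smul_smul,
        ← mul_smul_comm (q ^ 2) (bg q ^ n) (Eg q * bg q),
        Eb q hq0]
      simp only [mul_add, mul_sub, mul_smul_comm, smul_smul, smul_sub, smul_add,
        ← mul_assoc, ← pow_succ]
      match_scalars <;> ring

-- b against powers of c (purely in q⁻¹)
lemma pow_bc (n : ℕ) :
    bg q * cg q ^ (n + 1) = cg q ^ (n + 1) * bg q
      + (q⁻¹ ^ (2 * (n + 1)) - 1) • (cg q ^ n * Eg q)
      + (-(q⁻¹ ^ (4 * (n + 1))) + (1 + q⁻¹ ^ 2) * q⁻¹ ^ (2 * (n + 1)) - q⁻¹ ^ 2)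
          • (cg q ^ n * (dg q * dg q)) := by
  induction n with
  | zero =>
      rw [pow_one, rel_bc]
      simp only [pow_zero, one_mul]
      match_scalars <;> ring
  | succ n ih =>
      rw [pow_succ (cg q) (n + 1), ← mul_assoc, ih, add_mul, add_mul, smul_mul_assoc,
        smul_mul_assoc, mul_assoc (cg q ^ (n + 1)), rel_bc,
        mul_assoc (cg q ^ n) (Eg q), Ec,
        mul_assoc (cg q ^ n) (dg q * dg q), ddc]
      simp only [mul_add, mul_sub, mul_smul_comm, smul_smul, smul_sub, smul_add,
        ← mul_assoc, ← pow_succ]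
      match_scalars <;> ring

lemma smul_cancel {c : ℂ} (hc : c ≠ 0) {x y : OqGL2 q} (h : c • x = c • y) : x = y := by
  have h2 := congrArg (fun z => c⁻¹ • z) h
  simpa [smul_smul, inv_mul_cancel₀ hc] using h2

lemma central_of_comm (z : OqGL2 q)
    (ha : z * ag q = ag q * z) (hb : z * bg q = bg q * z)
    (hc : z * cg q = cg q * z) (hd : z * dg q = dg q * z) :
    z ∈ Subalgebra.center ℂ (OqGL2 q) := by
  rw [Subalgebra.mem_center_iff]
  intro x
  obtain ⟨y, rfl⟩ := RingQuot.mkAlgHom_surjective ℂ (OqRel q) x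
  induction y using FreeAlgebra.induction with
  | grade0 r => simp [Algebra.commutes]
  | grade1 i =>
      cases i
      · exact ha.symm
      · exact hb.symm
      · exact hc.symm
      · exact hd.symm
  | mul x y hx hy => rw [map_mul, mul_assoc, hy, ← mul_assoc, hx, mul_assoc]
  | add x y hx hy => rw [map_add, add_mul, hx, hy, mul_add]

end Lemmas

/-- at a primitive ℓ-th root of unity q (ℓ > 1 odd), the elements
b^ℓ, c^ℓ and d^ℓ are central in O_q⁺(GL₂). -/
theorem stmt_15 (q : ℂ) (l : ℕ) (hl : 1 < l) (hodd : Odd l) (hq : IsPrimitiveRoot q l) :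
    bg q ^ l ∈ Subalgebra.center ℂ (OqGL2 q) ∧
    cg q ^ l ∈ Subalgebra.center ℂ (OqGL2 q) ∧
    dg q ^ l ∈ Subalgebra.center ℂ (OqGL2 q) := by
  have hq0 : q ≠ 0 := hq.ne_zero (by omega)
  have hql : q ^ l = 1 := hq.pow_eq_one
  have hil : q⁻¹ ^ l = 1 := by rw [inv_pow, hql, inv_one]
  obtain ⟨m, rfl⟩ : ∃ m, l = m + 1 := ⟨l - 1, by omega⟩
  have h2l : q ^ (2 * (m + 1)) = 1 := by rw [mul_comm, pow_mul, hql, one_pow]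
  have h4l : q ^ (4 * (m + 1)) = 1 := by rw [mul_comm, pow_mul, hql, one_pow]
  have hi2l : q⁻¹ ^ (2 * (m + 1)) = 1 := by rw [mul_comm, pow_mul, hil, one_pow]
  have hi4l : q⁻¹ ^ (4 * (m + 1)) = 1 := by rw [mul_comm, pow_mul, hil, one_pow]
  have hq2 : (q : ℂ) ^ 2 ≠ 0 := pow_ne_zero _ hq0
  have hq4 : (q : ℂ) ^ 4 ≠ 0 := pow_ne_zero _ hq0
  have hc1 : q ^ 2 * (q ^ (2 * (m + 1)) - 1) = 0 := by rw [h2l]; ring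
  have hc2 : (-(q ^ (4 * (m + 1))) + (q ^ 2 + 1) * q ^ (2 * (m + 1)) - q ^ 2 : ℂ) = 0 := by
    rw [h4l, h2l]; ring
  have hc1' : (q⁻¹ ^ (2 * (m + 1)) - 1 : ℂ) = 0 := by rw [hi2l]; ring
  have hc2' : (-(q⁻¹ ^ (4 * (m + 1))) + (1 + q⁻¹ ^ 2) * q⁻¹ ^ (2 * (m + 1)) - q⁻¹ ^ 2 : ℂ)
      = 0 := by rw [hi4l, hi2l]; ring
  refine ⟨?_, ?_, ?_⟩
  · -- b ^ l is central
    apply central_of_comm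
    · apply smul_cancel q hq2
      rw [pow_ba q hq0 (m + 1), h2l]
      simp
    · rw [← pow_succ, ← pow_succ']
    · apply smul_cancel q hq4
      rw [pow_cb q hq0 m, hc1, hc2, zero_smul, zero_smul, add_zero, add_zero]
    · rw [pow_db q (m + 1), h2l, one_smul]
  · -- c ^ l is central
    apply central_of_comm
    · apply smul_cancel q hq2
      rw [pow_ca q hq0 (m + 1), h2l]
      simp
    · rw [pow_bc q m, hc1', hc2', zero_smul, zero_smul, add_zero, add_zero]
    · rw [← pow_succ, ← pow_succ']
    · rw [pow_dc q (m + 1), hi2l, one_smul]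
  · -- d ^ l is central
    apply central_of_comm
    · exact (Commute.pow_left (rel_da q) (m + 1)).eq
    · rw [pow_bd q (m + 1), h2l, one_smul]
    · rw [pow_cd2 q (m + 1), hi2l, one_smul]
    · rw [← pow_succ, ← pow_succ']
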